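/- Assume the L²-SVD u = Σ_{k} σ_k^{00} ψ_k ⊗ φ_k converges in H¹(Ω). Then for every r: σ_r^{10} = ‖ψ_r¹‖₀^{-1/2} ( Σ_{k=1}^∞ (σ_k^{00})⁴ |⟨ψ_r¹, ψ_k⟩₁|² )^{1/4} ≥ σ_r^{00} ( ⟨ψ_r¹, ψ_r⟩₁ / ‖ψ_r¹‖₀ )^{1/2}, and σ_r^{01} = ‖φ_r¹‖₀^{-1/2} ( Σ_{k=1}^∞ (σ_k^{00})⁴ |⟨φ_r¹, φ_k⟩₁|² )^{1/4} ≥ σ_r^{00} ( ⟨φ_r¹, φ_r⟩₁ / ‖φ_r¹‖₀ )^{1/2}. -/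

import Mathlib

/-!
`H1₁, L2₁` model `H¹(Ω₁) ↪ L²(Ω₁)` (via `ι₁`) and `H1₂, L2₂` model `H¹(Ω₂) ↪ L²(Ω₂)`
(via `ι₂`).  `H` models `H¹(Ω)` with the continuous bilinear elementary tensor map `tp1`;
`H10` models `H^{(1,0)} = H¹(Ω₁) ⊗ L²(Ω₂)` and `H01` models `H^{(0,1)} = L²(Ω₁) ⊗ H¹(Ω₂)`, with
their canonical inner products and the embeddings `e10 : H¹(Ω) ↪ H^{(1,0)}`,
`e01 : H¹(Ω) ↪ H^{(0,1)}`.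

Fix `r` and contract both expansions of `u` in `H^{(1,0)}` against `· ⊗ φ⁰_r`.  The
`H^{(1,0)}`-SVD gives `σ¹⁰_r ψ¹_r`; the `L²`-SVD gives the series `∑_k (σ⁰⁰_k ⟨φ_k, φ⁰_r⟩) ψ_k`,
which converges to it in `H¹(Ω₁)` because contraction against a fixed vector is bounded.  Hence,
in `L²(Ω₁)`, Parseval for the orthonormal `ψ_k` gives
`∑_k (σ⁰⁰_k ⟨φ_k, φ⁰_r⟩)² = (σ¹⁰_r)² ‖ψ¹_r‖₀²`.  Pairing both expansions with `ψ¹_r ⊗ φ_j` gives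
`σ⁰⁰_j ⟨ψ¹_r, ψ_j⟩₁ = σ¹⁰_r ⟨φ_j, φ⁰_r⟩`, which turns this into
`∑_k (σ⁰⁰_k)⁴ ⟨ψ¹_r, ψ_k⟩₁² = (σ¹⁰_r)⁴ ‖ψ¹_r‖₀²`: the equality, and the inequality by keeping the
term `k = r`.  The `H^{(0,1)}` statement is the same argument with the factors swapped.
-/

open scoped RealInnerProductSpace

theorem eq_rpow_neg_half_mul_rpow_quarter {s N : ℝ} (hs : 0 ≤ s) (hN : 0 < N) :
    s = N ^ (-(1 : ℝ) / 2) * (s ^ 4 * N ^ 2) ^ ((1 : ℝ) / 4) := by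
  rw [Real.mul_rpow (by positivity) (by positivity), ← Real.rpow_natCast s 4,
    ← Real.rpow_natCast N 2, ← Real.rpow_mul hs, ← Real.rpow_mul hN.le, mul_left_comm,
    ← Real.rpow_add hN]
  norm_num

theorem mul_rpow_half_le_of_pow_four_mul_sq_le {σ a s N : ℝ} (hs : 0 ≤ s) (hN : 0 < N)
    (h : σ ^ 4 * a ^ 2 ≤ s ^ 4 * N ^ 2) : σ * (a / N) ^ ((1 : ℝ) / 2) ≤ s := by
  rw [← Real.sqrt_eq_rpow]
  rcases le_or_gt a 0 with ha | ha
  · rwa [Real.sqrt_eq_zero'.2 (div_nonpos_of_nonpos_of_nonneg ha hN.le), mul_zero]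
  · refine le_of_pow_le_pow_left₀ four_ne_zero hs ?_
    have hsqrt : √(a / N) ^ 4 = a ^ 2 / N ^ 2 := by
      rw [show 4 = 2 * 2 from rfl, pow_mul, Real.sq_sqrt (div_pos ha hN).le, div_pow]
    rwa [mul_pow, hsqrt, ← mul_div_assoc, div_le_iff₀ (by positivity)]

section

variable {κ E E' F G : Type*}
  [NormedAddCommGroup E] [InnerProductSpace ℝ E] [NormedAddCommGroup E'] [InnerProductSpace ℝ E']
  [NormedAddCommGroup F] [InnerProductSpace ℝ F] [NormedAddCommGroup G] [InnerProductSpace ℝ G]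

theorem HasSum.inner_eq_inner_of_forall_ne {g : κ → G} {v : G} (h : HasSum g v) (y : G) (j : κ)
    (hj : ∀ k ≠ j, ⟪y, g k⟫ = 0) : ⟪y, v⟫ = ⟪y, g j⟫ :=
  ((innerSL ℝ y).hasSum h).unique (hasSum_single j hj)

theorem Orthonormal.inner_eq_of_hasSum {e : κ → E} (he : Orthonormal ℝ e) {c : κ → ℝ} {w : E}
    (h : HasSum (fun k => c k • e k) w) (j : κ) : ⟪e j, w⟫ = c j := by
  rw [h.inner_eq_inner_of_forall_ne (e j) j fun k hk => by
      rw [real_inner_smul_right, he.inner_eq_zero hk.symm, mul_zero],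
    real_inner_smul_right, real_inner_self_eq_norm_sq, he.1 j, one_pow, mul_one]

theorem Orthonormal.hasSum_sq_of_hasSum {e : κ → E} (he : Orthonormal ℝ e) {c : κ → ℝ} {w : E}
    (h : HasSum (fun k => c k • e k) w) : HasSum (fun k => c k ^ 2) (‖w‖ ^ 2) := by
  have h' := (innerSL ℝ w).hasSum h
  simp only [innerSL_apply_apply, real_inner_smul_right, real_inner_self_eq_norm_sq] at h'
  have hcoeff : ∀ k, c k * ⟪w, e k⟫ = c k ^ 2 := fun k => by
    rw [real_inner_comm, he.inner_eq_of_hasSum h, sq]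
  simpa only [hcoeff] using h'

def IsInnerCrossnorm (tp : E →L[ℝ] F →L[ℝ] G) : Prop :=
  ∀ (x x' : E) (y y' : F), ⟪tp x y, tp x' y'⟫ = ⟪x, x'⟫ * ⟪y, y'⟫

namespace IsInnerCrossnorm

variable {tp : E →L[ℝ] F →L[ℝ] G}

theorem flip (htp : IsInnerCrossnorm tp) : IsInnerCrossnorm tp.flip := fun y y' x x' => by
  rw [ContinuousLinearMap.flip_apply, ContinuousLinearMap.flip_apply, htp, mul_comm]

theorem norm_apply (htp : IsInnerCrossnorm tp) (x : E) (y : F) : ‖tp x y‖ = ‖x‖ * ‖y‖ := by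
  rw [← sq_eq_sq₀ (norm_nonneg _) (by positivity), mul_pow, ← real_inner_self_eq_norm_sq,
    ← real_inner_self_eq_norm_sq, ← real_inner_self_eq_norm_sq, htp]

theorem norm_le_of_forall_inner_eq (htp : IsInnerCrossnorm tp) {a : E} {b : G} {y : F}
    (h : ∀ x, ⟪a, x⟫ = ⟪b, tp x y⟫) : ‖a‖ ≤ ‖b‖ * ‖y‖ := by
  have hsq : ‖a‖ ^ 2 ≤ ‖b‖ * ‖y‖ * ‖a‖ := by
    rw [← real_inner_self_eq_norm_sq, h a]
    calc ⟪b, tp a y⟫ ≤ ‖b‖ * ‖tp a y‖ := real_inner_le_norm _ _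
      _ = ‖b‖ * ‖y‖ * ‖a‖ := by rw [htp.norm_apply]; ring
  rcases (norm_nonneg a).eq_or_lt with ha | ha
  · rw [← ha]
    positivity
  · exact le_of_mul_le_mul_right (by rwa [← sq]) ha

theorem hasSum_contract (htp : IsInnerCrossnorm tp) {c : κ → ℝ} {a : κ → E} {f : κ → F}
    {v : G} (hv : HasSum (fun k => c k • tp (a k) (f k)) v) (y : F) {w : E}
    (hw : ∀ x, ⟪w, x⟫ = ⟪v, tp x y⟫) : HasSum (fun k => (c k * ⟪f k, y⟫) • a k) w := by
  have hpartial : ∀ (s : Finset κ) (x : E), ⟪∑ k ∈ s, (c k * ⟪f k, y⟫) • a k - w, x⟫ =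
      ⟪∑ k ∈ s, c k • tp (a k) (f k) - v, tp x y⟫ := fun s x => by
    rw [inner_sub_left, inner_sub_left, hw, sum_inner, sum_inner]
    congr 1
    refine Finset.sum_congr rfl fun k _ => ?_
    rw [real_inner_smul_left, real_inner_smul_left, htp]
    ring
  rw [HasSum, tendsto_iff_norm_sub_tendsto_zero]
  refine squeeze_zero (fun _ => norm_nonneg _)
    (fun s => htp.norm_le_of_forall_inner_eq (hpartial s)) ?_
  simpa using (tendsto_iff_norm_sub_tendsto_zero.mp hv).mul_const ‖y‖

theorem inner_eq_of_hasSum_of_orthonormal_right (htp : IsInnerCrossnorm tp) {c : κ → ℝ}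
    {a : κ → E} {f : κ → F} {v : G}
    (hv : HasSum (fun k => c k • tp (a k) (f k)) v) (hf : Orthonormal ℝ f) (x : E) (j : κ) :
    ⟪tp x (f j), v⟫ = c j * ⟪x, a j⟫ := by
  rw [hv.inner_eq_inner_of_forall_ne _ j fun k hk => by
      rw [real_inner_smul_right, htp, hf.inner_eq_zero hk.symm, mul_zero, mul_zero],
    real_inner_smul_right, htp, real_inner_self_eq_norm_sq, hf.1 j, one_pow, mul_one]

theorem inner_eq_of_hasSum_of_orthonormal_left (htp : IsInnerCrossnorm tp) {c : κ → ℝ}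
    {e : κ → E} {b : κ → F} {v : G}
    (hv : HasSum (fun k => c k • tp (e k) (b k)) v) (he : Orthonormal ℝ e) (y : F) (j : κ) :
    ⟪tp (e j) y, v⟫ = c j * ⟪y, b j⟫ :=
  htp.flip.inner_eq_of_hasSum_of_orthonormal_right
    (by simpa only [ContinuousLinearMap.flip_apply] using hv) he y j

theorem hasSum_pow_four_mul_inner_sq (htp : IsInnerCrossnorm tp) {ι : E →L[ℝ] E'}
    {σ0 σ1 : κ → ℝ} {ψ ψ1 : κ → E} {f φ0 : κ → F} {v : G}
    (hψ : Orthonormal ℝ (fun k => ι (ψ k))) (hf : Orthonormal ℝ f)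
    (hv : HasSum (fun k => σ0 k • tp (ψ k) (f k)) v)
    (hψ1 : Orthonormal ℝ ψ1) (hφ0 : Orthonormal ℝ φ0)
    (hSVD : HasSum (fun k => σ1 k • tp (ψ1 k) (φ0 k)) v) (r : κ) :
    HasSum (fun k => σ0 k ^ 4 * |⟪ψ1 r, ψ k⟫| ^ 2) (σ1 r ^ 4 * ‖ι (ψ1 r)‖ ^ 2) := by
  have hcoeff : ∀ k, σ0 k * ⟪ψ1 r, ψ k⟫ = σ1 r * ⟪f k, φ0 r⟫ := fun k => by
    rw [← htp.inner_eq_of_hasSum_of_orthonormal_right hv hf,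
      htp.inner_eq_of_hasSum_of_orthonormal_left hSVD hψ1]
  have hcontract : HasSum (fun k => (σ0 k * ⟪f k, φ0 r⟫) • ψ k) (σ1 r • ψ1 r) :=
    htp.hasSum_contract hv (φ0 r) fun x => by
      rw [real_inner_comm _ v, htp.inner_eq_of_hasSum_of_orthonormal_right hSVD hφ0,
        real_inner_smul_left, real_inner_comm]
  have hparseval := hψ.hasSum_sq_of_hasSum (by simpa only [map_smul] using ι.hasSum hcontract)
  have hterm : ∀ k, σ1 r ^ 2 * (σ0 k * ⟪f k, φ0 r⟫) ^ 2 = σ0 k ^ 4 * |⟪ψ1 r, ψ k⟫| ^ 2 :=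
    fun k => by
      rw [sq_abs]
      linear_combination -σ0 k ^ 2 * (σ0 k * ⟪ψ1 r, ψ k⟫ + σ1 r * ⟪f k, φ0 r⟫) * hcoeff k
  have htotal : σ1 r ^ 2 * ‖σ1 r • ι (ψ1 r)‖ ^ 2 = σ1 r ^ 4 * ‖ι (ψ1 r)‖ ^ 2 := by
    rw [norm_smul, Real.norm_eq_abs, mul_pow, sq_abs]
    ring
  rw [← funext hterm, ← htotal]
  exact hparseval.mul_left (σ1 r ^ 2)

theorem singularValue_eq_and_ge (htp : IsInnerCrossnorm tp) {ι : E →L[ℝ] E'}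
    (hι : Function.Injective ι) {σ0 σ1 : κ → ℝ} {ψ ψ1 : κ → E} {f φ0 : κ → F} {v : G}
    (hψ : Orthonormal ℝ (fun k => ι (ψ k))) (hf : Orthonormal ℝ f)
    (hv : HasSum (fun k => σ0 k • tp (ψ k) (f k)) v)
    (hψ1 : Orthonormal ℝ ψ1) (hφ0 : Orthonormal ℝ φ0)
    (hSVD : HasSum (fun k => σ1 k • tp (ψ1 k) (φ0 k)) v) {r : κ} (hσ1 : 0 ≤ σ1 r) :
    σ1 r = ‖ι (ψ1 r)‖ ^ (-(1 : ℝ) / 2) *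
        (∑' k, σ0 k ^ 4 * |⟪ψ1 r, ψ k⟫| ^ 2) ^ ((1 : ℝ) / 4) ∧
      σ0 r * (⟪ψ1 r, ψ r⟫ / ‖ι (ψ1 r)‖) ^ ((1 : ℝ) / 2) ≤ σ1 r := by
  have hsum := htp.hasSum_pow_four_mul_inner_sq hψ hf hv hψ1 hφ0 hSVD r
  have hN : 0 < ‖ι (ψ1 r)‖ :=
    norm_pos_iff.2 fun h => hψ1.ne_zero r (hι (h.trans (map_zero ι).symm))
  refine ⟨hsum.tsum_eq ▸ eq_rpow_neg_half_mul_rpow_quarter hσ1 hN,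
    mul_rpow_half_le_of_pow_four_mul_sq_le hσ1 hN ?_⟩
  simpa only [sq_abs] using le_hasSum hsum r fun k _ => by positivity

end IsInnerCrossnorm

end

theorem stmt_1_general
    (H1₁ L2₁ H1₂ L2₂ H H10 H01 : Type*)
    [NormedAddCommGroup H1₁] [InnerProductSpace ℝ H1₁]
    [NormedAddCommGroup L2₁] [InnerProductSpace ℝ L2₁]
    [NormedAddCommGroup H1₂] [InnerProductSpace ℝ H1₂]
    [NormedAddCommGroup L2₂] [InnerProductSpace ℝ L2₂]
    [NormedAddCommGroup H] [InnerProductSpace ℝ H]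
    [NormedAddCommGroup H10] [InnerProductSpace ℝ H10]
    [NormedAddCommGroup H01] [InnerProductSpace ℝ H01]
    (ι₁ : H1₁ →L[ℝ] L2₁) (ι₂ : H1₂ →L[ℝ] L2₂)
    (hι₁ : Function.Injective ι₁) (hι₂ : Function.Injective ι₂)
    (tp1 : H1₁ →L[ℝ] H1₂ →L[ℝ] H)
    (tp10 : H1₁ →L[ℝ] L2₂ →L[ℝ] H10)
    (tp01 : L2₁ →L[ℝ] H1₂ →L[ℝ] H01)
    (e10 : H →L[ℝ] H10) (e01 : H →L[ℝ] H01)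
    -- canonical crossnorm inner products on the tensor spaces
    (h10cross : ∀ (x x' : H1₁) (y y' : L2₂),
      ⟪tp10 x y, tp10 x' y'⟫ = ⟪x, x'⟫ * ⟪y, y'⟫)
    (h01cross : ∀ (x x' : L2₁) (y y' : H1₂),
      ⟪tp01 x y, tp01 x' y'⟫ = ⟪x, x'⟫ * ⟪y, y'⟫)
    -- compatibility of the embeddings with elementary tensors
    (he10 : ∀ x y, e10 (tp1 x y) = tp10 x (ι₂ y))
    (he01 : ∀ x y, e01 (tp1 x y) = tp01 (ι₁ x) y)
    (u : H)
    -- the `L²`-SVD of `u` : `u = ∑_k σ00_k ψ_k ⊗ φ_k`, converging in `H¹(Ω)`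
    (σ00 : ℕ → ℝ) (ψ : ℕ → H1₁) (φ : ℕ → H1₂)
    (hψON : Orthonormal ℝ (fun k => ι₁ (ψ k)))
    (hφON : Orthonormal ℝ (fun k => ι₂ (φ k)))
    (hconv : HasSum (fun k => σ00 k • tp1 (ψ k) (φ k)) u)
    -- the `H^{(1,0)}`-SVD of `u`
    (σ10 : ℕ → ℝ) (ψ1 : ℕ → H1₁) (φ0 : ℕ → L2₂)
    (hσ10p : ∀ k, 0 ≤ σ10 k)
    (hψ1ON : Orthonormal ℝ ψ1) (hφ0ON : Orthonormal ℝ φ0)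
    (h10SVD : HasSum (fun k => σ10 k • tp10 (ψ1 k) (φ0 k)) (e10 u))
    -- the `H^{(0,1)}`-SVD of `u`
    (σ01 : ℕ → ℝ) (ψ0 : ℕ → L2₁) (φ1 : ℕ → H1₂)
    (hσ01p : ∀ k, 0 ≤ σ01 k)
    (hψ0ON : Orthonormal ℝ ψ0) (hφ1ON : Orthonormal ℝ φ1)
    (h01SVD : HasSum (fun k => σ01 k • tp01 (ψ0 k) (φ1 k)) (e01 u)) :
    ∀ r : ℕ,
      (σ10 r = ‖ι₁ (ψ1 r)‖ ^ (-(1 : ℝ) / 2) *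
          (∑' k : ℕ, σ00 k ^ 4 * |⟪ψ1 r, ψ k⟫| ^ 2) ^ ((1 : ℝ) / 4) ∧
        σ00 r * (⟪ψ1 r, ψ r⟫ / ‖ι₁ (ψ1 r)‖) ^ ((1 : ℝ) / 2) ≤ σ10 r) ∧
      (σ01 r = ‖ι₂ (φ1 r)‖ ^ (-(1 : ℝ) / 2) *
          (∑' k : ℕ, σ00 k ^ 4 * |⟪φ1 r, φ k⟫| ^ 2) ^ ((1 : ℝ) / 4) ∧
        σ00 r * (⟪φ1 r, φ r⟫ / ‖ι₂ (φ1 r)‖) ^ ((1 : ℝ) / 2) ≤ σ01 r) := by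
  intro r
  have hv10 : HasSum (fun k => σ00 k • tp10 (ψ k) (ι₂ (φ k))) (e10 u) := by
    simpa only [map_smul, he10] using e10.hasSum hconv
  have hv01 : HasSum (fun k => σ00 k • tp01.flip (φ k) (ι₁ (ψ k))) (e01 u) := by
    simpa only [map_smul, he01, ContinuousLinearMap.flip_apply] using e01.hasSum hconv
  have h01SVD' : HasSum (fun k => σ01 k • tp01.flip (φ1 k) (ψ0 k)) (e01 u) := by
    simpa only [ContinuousLinearMap.flip_apply] using h01SVD
  exact ⟨IsInnerCrossnorm.singularValue_eq_and_ge h10cross hι₁ hψON hφON hv10 hψ1ON hφ0ON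
      h10SVD (hσ10p r),
    (IsInnerCrossnorm.flip h01cross).singularValue_eq_and_ge hι₂ hφON hψON hv01
      hφ1ON hψ0ON h01SVD' (hσ01p r)⟩

theorem stmt_1
    (H1₁ L2₁ H1₂ L2₂ H H10 H01 : Type*)
    [NormedAddCommGroup H1₁] [InnerProductSpace ℝ H1₁]
    [NormedAddCommGroup L2₁] [InnerProductSpace ℝ L2₁]
    [NormedAddCommGroup H1₂] [InnerProductSpace ℝ H1₂]
    [NormedAddCommGroup L2₂] [InnerProductSpace ℝ L2₂]
    [NormedAddCommGroup H] [InnerProductSpace ℝ H]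
    [NormedAddCommGroup H10] [InnerProductSpace ℝ H10]
    [NormedAddCommGroup H01] [InnerProductSpace ℝ H01]
    (ι₁ : H1₁ →L[ℝ] L2₁) (ι₂ : H1₂ →L[ℝ] L2₂)
    (hι₁ : Function.Injective ι₁) (hι₂ : Function.Injective ι₂)
    (tp1 : H1₁ →L[ℝ] H1₂ →L[ℝ] H)
    (tp10 : H1₁ →L[ℝ] L2₂ →L[ℝ] H10)
    (tp01 : L2₁ →L[ℝ] H1₂ →L[ℝ] H01)
    (e10 : H →L[ℝ] H10) (e01 : H →L[ℝ] H01)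
    -- canonical crossnorm inner products on the tensor spaces
    (h10cross : ∀ (x x' : H1₁) (y y' : L2₂),
      ⟪tp10 x y, tp10 x' y'⟫ = ⟪x, x'⟫ * ⟪y, y'⟫)
    (h01cross : ∀ (x x' : L2₁) (y y' : H1₂),
      ⟪tp01 x y, tp01 x' y'⟫ = ⟪x, x'⟫ * ⟪y, y'⟫)
    -- compatibility of the embeddings with elementary tensors
    (he10 : ∀ x y, e10 (tp1 x y) = tp10 x (ι₂ y))
    (he01 : ∀ x y, e01 (tp1 x y) = tp01 (ι₁ x) y)
    (u : H)
    -- the `L²`-SVD of `u` : `u = ∑_k σ00_k ψ_k ⊗ φ_k`, converging in `H¹(Ω)`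
    (σ00 : ℕ → ℝ) (ψ : ℕ → H1₁) (φ : ℕ → H1₂)
    (hσ00a : Antitone σ00) (hσ00p : ∀ k, 0 ≤ σ00 k)
    (hψON : Orthonormal ℝ (fun k => ι₁ (ψ k)))
    (hφON : Orthonormal ℝ (fun k => ι₂ (φ k)))
    (hconv : HasSum (fun k => σ00 k • tp1 (ψ k) (φ k)) u)
    -- the `H^{(1,0)}`-SVD of `u`
    (σ10 : ℕ → ℝ) (ψ1 : ℕ → H1₁) (φ0 : ℕ → L2₂)
    (hσ10a : Antitone σ10) (hσ10p : ∀ k, 0 ≤ σ10 k)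
    (hψ1ON : Orthonormal ℝ ψ1) (hφ0ON : Orthonormal ℝ φ0)
    (h10SVD : HasSum (fun k => σ10 k • tp10 (ψ1 k) (φ0 k)) (e10 u))
    -- the `H^{(0,1)}`-SVD of `u`
    (σ01 : ℕ → ℝ) (ψ0 : ℕ → L2₁) (φ1 : ℕ → H1₂)
    (hσ01a : Antitone σ01) (hσ01p : ∀ k, 0 ≤ σ01 k)
    (hψ0ON : Orthonormal ℝ ψ0) (hφ1ON : Orthonormal ℝ φ1)
    (h01SVD : HasSum (fun k => σ01 k • tp01 (ψ0 k) (φ1 k)) (e01 u)) :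
    ∀ r : ℕ,
      (σ10 r = ‖ι₁ (ψ1 r)‖ ^ (-(1 : ℝ) / 2) *
          (∑' k : ℕ, σ00 k ^ 4 * |⟪ψ1 r, ψ k⟫| ^ 2) ^ ((1 : ℝ) / 4) ∧
        σ00 r * (⟪ψ1 r, ψ r⟫ / ‖ι₁ (ψ1 r)‖) ^ ((1 : ℝ) / 2) ≤ σ10 r) ∧
      (σ01 r = ‖ι₂ (φ1 r)‖ ^ (-(1 : ℝ) / 2) *
          (∑' k : ℕ, σ00 k ^ 4 * |⟪φ1 r, φ k⟫| ^ 2) ^ ((1 : ℝ) / 4) ∧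
        σ00 r * (⟪φ1 r, φ r⟫ / ‖ι₂ (φ1 r)‖) ^ ((1 : ℝ) / 2) ≤ σ01 r) :=
  stmt_1_general H1₁ L2₁ H1₂ L2₂ H H10 H01 ι₁ ι₂ hι₁ hι₂ tp1 tp10 tp01 e10 e01 h10cross h01cross
    he10 he01 u σ00 ψ φ hψON hφON hconv σ10 ψ1 φ0 hσ10p hψ1ON hφ0ON h10SVD σ01 ψ0 φ1 hσ01p hψ0ON
    hφ1ON h01SVD
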